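/- Let 𝔏 be a λ-synchronizing, left-resolving, predecessor-separated λ-graph system presenting a subshift Λ. Then the sets S_{v_i^l}(Λ) of words launched by the vertices v_1^l, ..., v_{m(l)}^l of V_l form a partition of S_l(Λ), the set of l-synchronizing words of Λ. -/

import Mathlib

open scoped Classical

/-- The language of a subshift over alphabet `A`: nonempty, factorial
(closed under subwords) and extendable on both sides. -/
structure ShiftLang (A : Type*) where
  L : Set (List A)
  nil_mem : [] ∈ L
  factor : ∀ u v w : List A, u ++ v ++ w ∈ L → v ∈ L
  ext_left : ∀ w ∈ L, ∃ a : A, (a :: w) ∈ L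
  ext_right : ∀ w ∈ L, ∃ a : A, (w ++ [a]) ∈ L

namespace ShiftLang

variable {A : Type*} (Λ : ShiftLang A)

/-- Admissible words of length `l`. -/
def B (l : ℕ) : Set (List A) := {w | w ∈ Λ.L ∧ w.length = l}

/-- `Γ_l^-(μ)`: admissible words `ν` of length `l` with `νμ` admissible. -/
def Γminus (l : ℕ) (μ : List A) : Set (List A) := {ν | ν ∈ Λ.B l ∧ ν ++ μ ∈ Λ.L}

/-- `Γ_*^+(μ)`: followers of `μ`. -/
def Γplus (μ : List A) : Set (List A) := {ω | μ ++ ω ∈ Λ.L}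

/-- `S_l(Λ)`: the set of `l`-synchronizing words. -/
def Sync (l : ℕ) : Set (List A) :=
  {μ | μ ∈ Λ.L ∧ ∀ ω ∈ Λ.Γplus μ, Λ.Γminus l μ = Λ.Γminus l (μ ++ ω)}

/-- Irreducibility of a subshift in terms of its language. -/
def Irreducible : Prop := ∀ μ ∈ Λ.L, ∀ ν ∈ Λ.L, ∃ η, μ ++ η ++ ν ∈ Λ.L

/-- `λ`-synchronization of a subshift. -/
def IsLambdaSync : Prop :=
  ∀ l : ℕ, ∀ η ∈ Λ.B l, ∀ k : ℕ, l ≤ k → ∃ ν ∈ Λ.Sync k, η ++ ν ∈ Λ.Sync (k - l)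

/-- `μ ≻ ν` : there is `η` with `Γ_*^+(ν) = Γ_*^+(μην)`. -/
def Succ (μ ν : List A) : Prop := ∃ η, Λ.Γplus ν = Λ.Γplus (μ ++ η ++ ν)

/-- Synchronizing transitivity. -/
def SyncTransitive : Prop := ∀ μ ∈ Λ.L, ∀ ν ∈ Λ.L, Λ.Succ μ ν ∧ Λ.Succ ν μ

/-- The right one-sided shift space `X_Λ`. -/
def X : Set (ℕ → A) := {x | ∀ n : ℕ, (List.ofFn fun i : Fin n => x i) ∈ Λ.L}

end ShiftLang

/-- A (left-resolving–free) `λ`-graph system: a labeled Bratteli diagram with `ι`-maps. -/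
structure LGS (A : Type*) where
  V : ℕ → Type
  edge : ∀ l : ℕ, V l → A → V (l + 1) → Prop
  ι : ∀ l : ℕ, V (l + 1) → V l
  ι_surj : ∀ l, Function.Surjective (ι l)
  exists_succ : ∀ l (v : V l), ∃ a u, edge l v a u
  exists_pred : ∀ l (u : V (l + 1)), ∃ a v, edge l v a u
  local_prop : ∀ l (u : V l) (v : V (l + 2)) (a : A),
    (∃ w, edge (l + 1) w a v ∧ ι l w = u) ↔ edge l u a (ι (l + 1) v)

namespace LGS

variable {A : Type*} (G : LGS A)

/-- Labeled paths in a `λ`-graph system. -/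
inductive Path : ∀ {l m : ℕ}, G.V l → List A → G.V m → Prop
  | nil {l : ℕ} (v : G.V l) : Path v [] v
  | cons {l m : ℕ} {v : G.V l} {a : A} {u : G.V (l + 1)} {w : List A} {x : G.V m} :
      G.edge l v a u → Path u w x → Path v (a :: w) x

/-- The word `w` leaves the vertex `v`. -/
def Leaves {l : ℕ} (v : G.V l) (w : List A) : Prop := ∃ m, ∃ u : G.V m, G.Path v w u

/-- The vertex `v` launches the word `w`: `w` leaves `v` and no other vertex of `V_l`. -/
def Launches {l : ℕ} (v : G.V l) (w : List A) : Prop :=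
  G.Leaves v w ∧ ∀ v' : G.V l, G.Leaves v' w → v' = v

/-- Left-resolving: edges with the same label have distinct terminal vertices. -/
def LeftResolving : Prop :=
  ∀ (l : ℕ) (v v' : G.V l) (a : A) (u : G.V (l + 1)), G.edge l v a u → G.edge l v' a u → v = v'

/-- The predecessor set `Γ_l^-(v)` of a vertex: words of length `l` labeling paths from `V_0` to `v`. -/
def ΓminusV {l : ℕ} (v : G.V l) : Set (List A) :=
  {w | w.length = l ∧ ∃ v0 : G.V 0, G.Path v0 w v}

/-- Predecessor-separated: distinct vertices of `V_l` have distinct predecessor sets. -/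
def PredecessorSeparated : Prop := ∀ (l : ℕ) (u v : G.V l), G.ΓminusV u = G.ΓminusV v → u = v

/-- A `λ`-synchronizing `λ`-graph system: every vertex launches some word. -/
def LambdaSynchronizing : Prop := ∀ (l : ℕ) (v : G.V l), ∃ w : List A, G.Launches v w

/-- `G` presents the subshift `Λ`: the language of `Λ` is the set of words labeling paths of `G`. -/
def Presents (Λ : ShiftLang A) : Prop :=
  ∀ w : List A, w ∈ Λ.L ↔ ∃ (l : ℕ) (v : G.V l), G.Leaves v w

/-- Iterated `ι`-map `ι^n : V_{l+n} → V_l`. -/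
def iotaPow : ∀ (n : ℕ) {l : ℕ}, G.V (l + n) → G.V l
  | 0, _, v => v
  | n + 1, l, v => iotaPow n (G.ι (l + n) v)

/-- `ι`-irreducibility of a `λ`-graph system. -/
def IotaIrreducible : Prop :=
  ∀ (l : ℕ) (v u : G.V l) (γ : List A) (t : G.V (l + γ.length)), G.Path u γ t →
    ∃ (n : ℕ) (u' : G.V (l + n)) (w : List A) (t' : G.V (l + n + γ.length)),
      G.iotaPow n u' = u ∧ G.Path v w u' ∧ G.Path u' γ t' ∧
      G.iotaPow n (cast (congrArg G.V (Nat.add_right_comm l n γ.length)) t') = t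

/-- `λ`-irreducibility of a `λ`-graph system. -/
def LambdaIrreducible : Prop :=
  ∀ (l : ℕ) (u v : G.V l), ∃ L : ℕ, ∀ w : G.V (l + L),
    G.iotaPow L w = u → ∃ γ : List A, G.Path v γ w

/-- `Γ_∞^+(v)`: infinite label sequences of infinite paths starting at `v`. -/
def GammaInf {l : ℕ} (v : G.V l) : Set (ℕ → A) :=
  {x | ∃ vs : ∀ n : ℕ, G.V (l + n), vs 0 = v ∧ ∀ n, G.edge (l + n) (vs n) (x n) (vs (n + 1))}

/-- Condition (I): every vertex has at least two distinct infinite follower label sequences. -/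
def ConditionI : Prop := ∀ (l : ℕ) (v : G.V l), ∃ x ∈ G.GammaInf v, ∃ y ∈ G.GammaInf v, x ≠ y

/-- `G` is (isomorphic to) the `λ`-synchronizing `λ`-graph system `𝔏^{λ(Λ)}` of `Λ`:
vertices of `V_l` correspond to `l`-past equivalence classes of `l`-synchronizing words
(identified via their predecessor sets), and edges are as in the canonical construction. -/
def IsLambdaSyncSystem (Λ : ShiftLang A) : Prop :=
  (∀ (l : ℕ) (v : G.V l), ∃ μ ∈ Λ.Sync l, G.ΓminusV v = Λ.Γminus l μ) ∧
  (∀ l : ℕ, ∀ μ ∈ Λ.Sync l, ∃ v : G.V l, G.ΓminusV v = Λ.Γminus l μ) ∧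
  (∀ (l : ℕ) (v : G.V l) (a : A) (u : G.V (l + 1)),
    G.edge l v a u ↔ ∃ ν ∈ Λ.Sync (l + 1), (a :: ν) ∈ Λ.L ∧
      G.ΓminusV u = Λ.Γminus (l + 1) ν ∧ G.ΓminusV v = Λ.Γminus l (a :: ν))

end LGS

/-- The partial isometry `S_w = S_{w_1} ⋯ S_{w_k}` associated with a word. -/
def sword {A R : Type*} [Monoid R] (S : A → R) (w : List A) : R := (w.map S).prod

/-! If `v ∈ V_l` launches `ν`, every path from `V_0` labeled `μν` with `|μ| = l` passes through `v`
after `μ`, so `Γ_l^-(ν) = Γ_l^-(v)`; as `v` also launches every admissible `νω`, launched words are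
synchronizing.
Conversely, if `u ∈ V_l` emits an `l`-synchronizing `ν` along a path ending at `t`, and `t` launches
`η`, then left-resolvingness makes `u` launch `νη`, so `Γ_l^-(u) = Γ_l^-(νη) = Γ_l^-(ν)`; by
predecessor separation only one vertex of `V_l` can emit `ν`. -/

namespace LGS

variable {A : Type*} {G : LGS A}

namespace Path

theorem length_eq {l m : ℕ} {v : G.V l} {w : List A} {x : G.V m} (p : G.Path v w x) :
    m = l + w.length := by
  induction p with
  | nil => rfl
  | cons _ _ ih => rw [ih, List.length_cons]; omega

theorem append {l m k : ℕ} {v : G.V l} {y : G.V m} {x : G.V k} {w₁ w₂ : List A}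
    (p₁ : G.Path v w₁ y) (p₂ : G.Path y w₂ x) : G.Path v (w₁ ++ w₂) x := by
  induction p₁ with
  | nil => exact p₂
  | cons e _ ih => exact .cons e (ih p₂)

theorem exists_of_cons {l m : ℕ} {v : G.V l} {a : A} {w : List A} {x : G.V m}
    (p : G.Path v (a :: w) x) : ∃ u : G.V (l + 1), G.edge l v a u ∧ G.Path u w x := by
  cases p with
  | cons e p => exact ⟨_, e, p⟩

theorem exists_of_append {l m : ℕ} {v : G.V l} {x : G.V m} {w₁ w₂ : List A}
    (p : G.Path v (w₁ ++ w₂) x) : ∃ (k : ℕ) (y : G.V k), G.Path v w₁ y ∧ G.Path y w₂ x := by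
  induction w₁ generalizing l v with
  | nil => exact ⟨l, v, .nil v, p⟩
  | cons a w₁ ih =>
    obtain ⟨u, e, p⟩ := p.exists_of_cons
    obtain ⟨k, y, p₁, p₂⟩ := ih p
    exact ⟨k, y, .cons e p₁, p₂⟩

theorem source_unique (hlr : G.LeftResolving) {w : List A} {l m : ℕ} {u u' : G.V l} {t : G.V m}
    (p : G.Path u w t) (p' : G.Path u' w t) : u = u' := by
  induction w generalizing l with
  | nil => cases p; cases p'; rfl
  | cons a w ih =>
    obtain ⟨s, e, p⟩ := p.exists_of_cons
    obtain ⟨s', e', p'⟩ := p'.exists_of_cons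
    obtain rfl : s = s' := ih p p'
    exact hlr l u u' a s e e'

theorem ι {w : List A} {l m : ℕ} {v : G.V (l + 1)} {x : G.V (m + 1)} (p : G.Path v w x) :
    G.Path (G.ι l v) w (G.ι m x) := by
  induction w generalizing l with
  | nil => cases p; exact .nil _
  | cons a w ih =>
    obtain ⟨u, e, p⟩ := p.exists_of_cons
    exact .cons ((G.local_prop l (G.ι l v) u a).mp ⟨v, e, rfl⟩) (ih p)

theorem exists_lift {w : List A} {l m : ℕ} {v : G.V l} {x : G.V m} (p : G.Path v w x)
    (x' : G.V (m + 1)) (hx : G.ι m x' = x) :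
    ∃ v' : G.V (l + 1), G.ι l v' = v ∧ G.Path v' w x' := by
  induction w generalizing l with
  | nil => cases p; exact ⟨x', hx, .nil _⟩
  | cons a w ih =>
    obtain ⟨u, e, p⟩ := p.exists_of_cons
    obtain ⟨u', rfl, p'⟩ := ih p
    obtain ⟨v', e', rfl⟩ := (G.local_prop l v u' a).mpr e
    exact ⟨v', rfl, .cons e' p'⟩

end Path

theorem Leaves.ι {l : ℕ} {v : G.V (l + 1)} {w : List A} (h : G.Leaves v w) :
    G.Leaves (G.ι l v) w := by
  obtain ⟨m, x, p⟩ := h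
  obtain rfl : m = (l + w.length) + 1 := by have := p.length_eq; omega
  exact ⟨_, _, p.ι⟩

theorem Leaves.exists_lift {l : ℕ} {v : G.V l} {w : List A} (h : G.Leaves v w) :
    ∃ v' : G.V (l + 1), G.Leaves v' w := by
  obtain ⟨m, x, p⟩ := h
  obtain ⟨x', hx⟩ := G.ι_surj m x
  obtain ⟨v', -, p'⟩ := p.exists_lift x' hx
  exact ⟨v', _, _, p'⟩

theorem Leaves.exists_level_zero {l : ℕ} {v : G.V l} {w : List A} (h : G.Leaves v w) :
    ∃ v₀ : G.V 0, G.Leaves v₀ w := by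
  induction l with
  | zero => exact ⟨v, h⟩
  | succ l ih => exact ih h.ι

variable {Λ : ShiftLang A}

theorem Presents.exists_leaves (hpres : G.Presents Λ) {w : List A} (hw : w ∈ Λ.L) (l : ℕ) :
    ∃ v : G.V l, G.Leaves v w := by
  induction l with
  | zero =>
    obtain ⟨m, v, h⟩ := (hpres w).mp hw
    exact h.exists_level_zero
  | succ l ih =>
    obtain ⟨v, h⟩ := ih
    exact h.exists_lift

theorem Presents.ΓminusV_subset_Γminus (hpres : G.Presents Λ) {l : ℕ} {v : G.V l} {ν : List A}
    (hν : G.Leaves v ν) : G.ΓminusV v ⊆ Λ.Γminus l ν := by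
  rintro μ ⟨hlen, v₀, p₀⟩
  obtain ⟨m, t, p⟩ := hν
  exact ⟨⟨(hpres μ).mpr ⟨0, v₀, l, v, p₀⟩, hlen⟩, (hpres _).mpr ⟨0, v₀, m, t, p₀.append p⟩⟩

theorem Presents.exists_mem_ΓminusV (hpres : G.Presents Λ) {l : ℕ} {μ ν : List A}
    (hμ : μ ∈ Λ.Γminus l ν) : ∃ y : G.V l, μ ∈ G.ΓminusV y ∧ G.Leaves y ν := by
  obtain ⟨⟨-, hlen⟩, hμν⟩ := hμ
  obtain ⟨v₀, m, x, p⟩ := hpres.exists_leaves hμν 0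
  obtain ⟨k, y, pμ, pν⟩ := p.exists_of_append
  obtain rfl : k = l := by have := pμ.length_eq; omega
  exact ⟨y, ⟨hlen, v₀, pμ⟩, _, _, pν⟩

theorem Launches.ΓminusV_eq (hpres : G.Presents Λ) {l : ℕ} {v : G.V l} {ν : List A}
    (h : G.Launches v ν) : G.ΓminusV v = Λ.Γminus l ν := by
  refine (hpres.ΓminusV_subset_Γminus h.1).antisymm fun μ hμ => ?_
  obtain ⟨y, hy, hyν⟩ := hpres.exists_mem_ΓminusV hμ
  rwa [← h.2 y hyν]

theorem Launches.append (hpres : G.Presents Λ) {l : ℕ} {v : G.V l} {ν ω : List A}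
    (h : G.Launches v ν) (hνω : ν ++ ω ∈ Λ.L) : G.Launches v (ν ++ ω) := by
  have leaves_ν {u : G.V l} (hu : G.Leaves u (ν ++ ω)) : G.Leaves u ν := by
    obtain ⟨m, x, p⟩ := hu
    obtain ⟨k, y, pν, -⟩ := p.exists_of_append
    exact ⟨k, y, pν⟩
  obtain ⟨u, hu⟩ := hpres.exists_leaves hνω l
  obtain rfl := h.2 u (leaves_ν hu)
  exact ⟨hu, fun v' hv' => h.2 v' (leaves_ν hv')⟩

theorem Launches.mem_sync (hpres : G.Presents Λ) {l : ℕ} {v : G.V l} {ν : List A}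
    (h : G.Launches v ν) : ν ∈ Λ.Sync l := by
  refine ⟨(hpres ν).mpr ⟨l, v, h.1⟩, fun ω hω => ?_⟩
  rw [← h.ΓminusV_eq hpres, (h.append hpres hω).ΓminusV_eq hpres]

theorem Launches.path_append (hlr : G.LeftResolving) {l m : ℕ} {u : G.V l} {t : G.V m}
    {ν η : List A} (p : G.Path u ν t) (h : G.Launches t η) : G.Launches u (ν ++ η) := by
  obtain ⟨k, x, pη⟩ := h.1
  refine ⟨⟨k, x, p.append pη⟩, fun u' ⟨_, _, p'⟩ => ?_⟩
  obtain ⟨k', s, pν', pη'⟩ := p'.exists_of_append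
  obtain rfl : k' = m := by have := pν'.length_eq; have := p.length_eq; omega
  obtain rfl := h.2 s ⟨_, _, pη'⟩
  exact pν'.source_unique hlr p

theorem ΓminusV_eq_Γminus_of_mem_sync (hpres : G.Presents Λ) (hlr : G.LeftResolving)
    (hls : G.LambdaSynchronizing) {l : ℕ} {u : G.V l} {ν : List A} (hν : ν ∈ Λ.Sync l)
    (hu : G.Leaves u ν) : G.ΓminusV u = Λ.Γminus l ν := by
  obtain ⟨m, t, p⟩ := hu
  obtain ⟨η, hη⟩ := hls m t
  have hνη := hη.path_append hlr p
  rw [hνη.ΓminusV_eq hpres, hν.2 η ((hpres _).mpr ⟨l, u, hνη.1⟩)]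

theorem exists_launches_of_mem_sync (hpres : G.Presents Λ) (hlr : G.LeftResolving)
    (hps : G.PredecessorSeparated) (hls : G.LambdaSynchronizing) {l : ℕ} {ν : List A}
    (hν : ν ∈ Λ.Sync l) : ∃ v : G.V l, G.Launches v ν := by
  obtain ⟨v, hv⟩ := hpres.exists_leaves hν.1 l
  refine ⟨v, hv, fun v' hv' => hps l v' v ?_⟩
  rw [ΓminusV_eq_Γminus_of_mem_sync hpres hlr hls hν hv',
    ΓminusV_eq_Γminus_of_mem_sync hpres hlr hls hν hv]

end LGS

/-- for a `λ`-synchronizing, left-resolving, predecessor-separated `λ`-graph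
system `G` presenting `Λ`, the sets `S_{v}(Λ)` of words launched by the vertices `v ∈ V_l`
partition `S_l(Λ)`: every `l`-synchronizing word is launched by some vertex, and no word is
launched by two distinct vertices. -/
theorem launch_sets_partition {A : Type*} (G : LGS A) (Λ : ShiftLang A)
    (hpres : G.Presents Λ) (hlr : G.LeftResolving) (hps : G.PredecessorSeparated)
    (hls : G.LambdaSynchronizing) (l : ℕ) :
    (∀ ν : List A, ν ∈ Λ.Sync l ↔ ∃ v : G.V l, G.Launches v ν) ∧
    (∀ (u v : G.V l) (ν : List A), G.Launches u ν → G.Launches v ν → u = v) :=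
  ⟨fun _ => ⟨G.exists_launches_of_mem_sync hpres hlr hps hls,
      fun ⟨_, hv⟩ => hv.mem_sync hpres⟩,
    fun _ v _ hu hv => (hu.2 v hv.1).symm⟩
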